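/- arXiv:1807.06570 — 2 statements merged into one kernel-verified Lean document; each statement's English description precedes it below -/
import Mathlib

section
/- Let o have residue field of characteristic 2 and let A ∈ M_2(o_{ℓ'}) have cyclic reduction mod π. Write w(A) = min{val(trace A), ℓ'} = k. If trace(A) ≠ 0 is written π^k·u with u a unit (or trace(A)=0 when val ≥ ℓ'), then defining δ(A) as the least index i < ⌊k/2⌋ with (det A)_{2i+1} ≠ 0 (and δ(A) = ⌊k/2⌋ if no such i exists), and defining s by: s = 2⌊k/2⌋+1 if det(A) is a square mod π^k, and s = m if det(A) = v₁² + π^m v₂² mod π^k with m < k odd and v₂ a unit — then δ(A) = ⌊s/2⌋. -/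
open scoped Classical

/-- The finite ring `o_{ℓ'} = F[[t]]/(t^{ℓ'})` for a field `F` of characteristic 2. -/
abbrev OFq (F : Type*) [Field F] (r : ℕ) : Type _ :=
  PowerSeries F ⧸ Ideal.span {(PowerSeries.X : PowerSeries F) ^ r}

/-- The `i`-th coefficient `(v)_i ∈ F` of the canonical expansion of `v ∈ o_r`. -/
noncomputable def coeffQ (F : Type*) [Field F] (r i : ℕ) (v : OFq F r) : F :=
  PowerSeries.coeff (R := F) i
    (Function.surjInv (f := Ideal.Quotient.mk (Ideal.span {(PowerSeries.X : PowerSeries F) ^ r}))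
      Ideal.Quotient.mk_surjective v)

/-- The image of the uniformizer `π` in `o_r`. -/
noncomputable def Xbar (F : Type*) [Field F] (r : ℕ) : OFq F r :=
  Ideal.Quotient.mk (Ideal.span {(PowerSeries.X : PowerSeries F) ^ r}) PowerSeries.X

/-- A 2×2 matrix `A` over a commutative ring is *cyclic* if there is a vector `v`
such that `{v, A.mulVec v}` is a basis of the free module `R²`. -/
def Mat2Cyclic {R : Type*} [CommRing R] (A : Matrix (Fin 2) (Fin 2) R) : Prop :=
  ∃ (v : Fin 2 → R) (b : Module.Basis (Fin 2) R (Fin 2 → R)), b 0 = v ∧ b 1 = A.mulVec v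

/-!
In characteristic 2 squaring acts coefficientwise on `π`-expansions, so a square has no odd
coefficients. If `det A ≡ v²` modulo `π^k`, all odd coefficients of `det A` below `k` vanish. If
`det A ≡ v₁² + π^s v₂²` with `s < k` odd and `v₂` a unit, the odd coefficients below `s` vanish and
the `s`-th one is `(v₂)₀² ≠ 0`. In both cases the least odd index is read off as `⌊s/2⌋`.
-/

open PowerSeries

lemma PowerSeries.coeff_odd_sq_eq_zero {R : Type*} [CommRing R] [CharP R 2] (g : R⟦X⟧) (m : ℕ) :
    coeff (2 * m + 1) (g ^ 2) = 0 := by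
  rw [sq, coeff_mul]
  -- the terms of indices `(a, b)` and `(b, a)` cancel, and `a = b` is impossible in odd degree
  refine Finset.sum_involution (fun p _ => p.swap) (fun p _ => ?_) (fun p hp _ hswap => ?_)
    (fun p hp => ?_) (fun p _ => Prod.swap_swap p)
  · simp [mul_comm, CharTwo.add_self_eq_zero]
  · have hsum := Finset.HasAntidiagonal.mem_antidiagonal.1 hp
    have hdiag : p.2 = p.1 := congrArg Prod.fst hswap
    omega
  · rw [Finset.HasAntidiagonal.mem_antidiagonal] at hp ⊢
    rwa [Prod.fst_swap, Prod.snd_swap, add_comm]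

lemma Nat.ite_exists_sInf_eq {P : ℕ → Prop} [DecidablePred P] {n m : ℕ} (hmn : m ≤ n)
    (hlt : ∀ i < m, ¬ P i) (hm : m < n → P m) :
    (if ∃ i, i < n ∧ P i then sInf {i | i < n ∧ P i} else n) = m := by
  rcases hmn.lt_or_eq with hmn | rfl
  · rw [if_pos ⟨m, hmn, hm hmn⟩]
    exact IsLeast.csInf_eq ⟨⟨hmn, hm hmn⟩, fun i hi => le_of_not_gt fun h => hlt i h hi.2⟩
  · exact if_neg fun ⟨i, hi, h⟩ => hlt i hi h

lemma sub_mem_span_pow_of_sub_add_pow_mul_mem {R : Type*} [CommRing R] {a b c x : R} {s k : ℕ}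
    (h : a - (b + x ^ s * c) ∈ Ideal.span {x ^ k}) (hsk : s ≤ k) :
    a - b ∈ Ideal.span {x ^ s} := by
  rw [show a - b = a - (b + x ^ s * c) + x ^ s * c by ring]
  exact add_mem (Ideal.span_singleton_le_span_singleton.2 (pow_dvd_pow x hsk) h)
    (Ideal.mem_span_singleton.2 (dvd_mul_right _ _))

section TruncatedPowerSeries

variable {F : Type*} [Field F] {r : ℕ}

lemma coeffQ_mk {i : ℕ} (hi : i < r) (p : F⟦X⟧) :
    coeffQ F r i (Ideal.Quotient.mk _ p) = coeff i p := by
  rw [coeffQ, ← sub_eq_zero, ← map_sub]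
  exact X_pow_dvd_iff.1
    (Ideal.mem_span_singleton.1 (Ideal.Quotient.eq.1 (Function.surjInv_eq _ _))) i hi

lemma coeffQ_add {i : ℕ} (hi : i < r) (x y : OFq F r) :
    coeffQ F r i (x + y) = coeffQ F r i x + coeffQ F r i y := by
  obtain ⟨p, rfl⟩ := Ideal.Quotient.mk_surjective x
  obtain ⟨q, rfl⟩ := Ideal.Quotient.mk_surjective y
  rw [← map_add, coeffQ_mk hi, coeffQ_mk hi, coeffQ_mk hi, map_add]

lemma coeffQ_eq_zero_of_mem_span_Xbar_pow {x : OFq F r} {i j : ℕ}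
    (hx : x ∈ Ideal.span {Xbar F r ^ j}) (hij : i < j) (hi : i < r) : coeffQ F r i x = 0 := by
  obtain ⟨c, rfl⟩ := Ideal.mem_span_singleton'.1 hx
  obtain ⟨p, rfl⟩ := Ideal.Quotient.mk_surjective c
  rw [Xbar, ← map_pow, ← map_mul, coeffQ_mk hi]
  exact X_pow_dvd_iff.1 (dvd_mul_left _ _) i hij

lemma coeffQ_odd_sq_eq_zero [CharP F 2] {m : ℕ} (hm : 2 * m + 1 < r) (x : OFq F r) :
    coeffQ F r (2 * m + 1) (x ^ 2) = 0 := by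
  obtain ⟨p, rfl⟩ := Ideal.Quotient.mk_surjective x
  rw [← map_pow, coeffQ_mk hm, coeff_odd_sq_eq_zero]

lemma coeffQ_Xbar_pow_mul_sq {s : ℕ} (hs : s < r) (x : OFq F r) :
    coeffQ F r s (Xbar F r ^ s * x ^ 2) = coeffQ F r 0 x ^ 2 := by
  obtain ⟨p, rfl⟩ := Ideal.Quotient.mk_surjective x
  rw [Xbar, ← map_pow, ← map_pow, ← map_mul, coeffQ_mk hs, coeffQ_mk (by omega)]
  have h := coeff_X_pow_mul (p ^ 2) s 0
  rw [zero_add] at h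
  rw [h, coeff_zero_eq_constantCoeff_apply, coeff_zero_eq_constantCoeff_apply, map_pow]

lemma coeffQ_zero_ne_zero_of_isUnit (hr : 0 < r) {u : OFq F r} (hu : IsUnit u) :
    coeffQ F r 0 u ≠ 0 := by
  obtain ⟨p, rfl⟩ := Ideal.Quotient.mk_surjective u
  have hker : ∀ a ∈ Ideal.span {(X : F⟦X⟧) ^ r}, constantCoeff a = 0 := by
    intro a ha
    obtain ⟨b, rfl⟩ := Ideal.mem_span_singleton.1 ha
    simp [hr.ne']
  rw [coeffQ_mk hr, coeff_zero_eq_constantCoeff_apply]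
  exact (hu.map (Ideal.Quotient.lift _ constantCoeff hker)).ne_zero

lemma coeffQ_odd_eq_zero_of_sub_sq_mem [CharP F 2] {a v : OFq F r} {j m : ℕ}
    (h : a - v ^ 2 ∈ Ideal.span {Xbar F r ^ j}) (hj : 2 * m + 1 < j) (hr : 2 * m + 1 < r) :
    coeffQ F r (2 * m + 1) a = 0 := by
  rw [← sub_add_cancel a (v ^ 2), coeffQ_add hr, coeffQ_eq_zero_of_mem_span_Xbar_pow h hj hr,
    coeffQ_odd_sq_eq_zero hr, add_zero]

lemma coeffQ_ne_zero_of_sub_sq_add_mem [CharP F 2] {a v : OFq F r} {u : (OFq F r)ˣ} {s k : ℕ}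
    (h : a - (v ^ 2 + Xbar F r ^ s * (u : OFq F r) ^ 2) ∈ Ideal.span {Xbar F r ^ k})
    (hs : Odd s) (hsk : s < k) (hkr : k ≤ r) :
    coeffQ F r s a ≠ 0 := by
  obtain ⟨m, rfl⟩ := hs
  have hr : 2 * m + 1 < r := by omega
  rw [← sub_add_cancel a (v ^ 2 + _), coeffQ_add hr, coeffQ_eq_zero_of_mem_span_Xbar_pow h hsk hr,
    zero_add, coeffQ_add hr, coeffQ_odd_sq_eq_zero hr, zero_add, coeffQ_Xbar_pow_mul_sq hr]
  exact pow_ne_zero 2 (coeffQ_zero_ne_zero_of_isUnit (by omega) u.isUnit)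

end TruncatedPowerSeries

theorem stmt_14_general {F : Type*} [Field F] [CharP F 2]
    (ℓ' : ℕ)
    (A : Matrix (Fin 2) (Fin 2) (OFq F ℓ'))
    (k : ℕ) (hkle : k ≤ ℓ')
    (s : ℕ)
    (hs : (s = 2 * (k / 2) + 1 ∧
            ∃ v : OFq F ℓ', A.det - v ^ 2 ∈ Ideal.span {Xbar F ℓ' ^ k}) ∨
          (s < k ∧ Odd s ∧
            ∃ (v₁ : OFq F ℓ') (v₂ : (OFq F ℓ')ˣ),
              A.det - (v₁ ^ 2 + Xbar F ℓ' ^ s * (v₂ : OFq F ℓ') ^ 2) ∈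
                Ideal.span {Xbar F ℓ' ^ k})) :
    (if ∃ i, i < k / 2 ∧ coeffQ F ℓ' (2 * i + 1) A.det ≠ 0 then
        sInf {i | i < k / 2 ∧ coeffQ F ℓ' (2 * i + 1) A.det ≠ 0}
      else k / 2) = s / 2 := by
  rcases hs with ⟨rfl, v, hv⟩ | ⟨hsk, ⟨m, rfl⟩, v₁, v₂, hv⟩
  · refine (Nat.ite_exists_sInf_eq le_rfl ?_ (absurd · (lt_irrefl _))).trans ?_
    · exact fun i hi => not_not.2 (coeffQ_odd_eq_zero_of_sub_sq_mem hv (by omega) (by omega))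
    · omega
  · have hv₁ := sub_mem_span_pow_of_sub_add_pow_mul_mem hv hsk.le
    refine (Nat.ite_exists_sInf_eq (m := m) ?_ ?_ ?_).trans ?_
    · omega
    · exact fun i hi => not_not.2 (coeffQ_odd_eq_zero_of_sub_sq_mem hv₁ (by omega) (by omega))
    · exact fun _ => coeffQ_ne_zero_of_sub_sq_add_mem hv ⟨m, rfl⟩ hsk hkle
    · omega

/-- with `k = min(val(trace A), ℓ')` and `s` defined by the parity pattern of
`det A` modulo `π^k`, the odd depth `δ(A)` (least `i < ⌊k/2⌋` with `(det A)_{2i+1} ≠ 0`,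
and `⌊k/2⌋` if none exists) equals `⌊s/2⌋`. -/
theorem stmt_14 {F : Type*} [Field F] [Fintype F] [CharP F 2]
    (ℓ' : ℕ) (hℓ' : 1 ≤ ℓ')
    (hle1 : Ideal.span {(PowerSeries.X : PowerSeries F) ^ ℓ'} ≤
      Ideal.span {(PowerSeries.X : PowerSeries F)})
    (A : Matrix (Fin 2) (Fin 2) (OFq F ℓ'))
    (hcyc : Mat2Cyclic (A.map (⇑(Ideal.Quotient.factor
      (S := Ideal.span {(PowerSeries.X : PowerSeries F) ^ ℓ'})
      (T := Ideal.span {(PowerSeries.X : PowerSeries F)}) hle1))))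
    (k : ℕ) (hkle : k ≤ ℓ')
    (hk1 : ∀ i, i < k → coeffQ F ℓ' i A.trace = 0)
    (hk2 : k < ℓ' → coeffQ F ℓ' k A.trace ≠ 0)
    (s : ℕ)
    (hs : (s = 2 * (k / 2) + 1 ∧
            ∃ v : OFq F ℓ', A.det - v ^ 2 ∈ Ideal.span {Xbar F ℓ' ^ k}) ∨
          (s < k ∧ Odd s ∧
            ∃ (v₁ : OFq F ℓ') (v₂ : (OFq F ℓ')ˣ),
              A.det - (v₁ ^ 2 + Xbar F ℓ' ^ s * (v₂ : OFq F ℓ') ^ 2) ∈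
                Ideal.span {Xbar F ℓ' ^ k})) :
    (if ∃ i, i < k / 2 ∧ coeffQ F ℓ' (2 * i + 1) A.det ≠ 0 then
        sInf {i | i < k / 2 ∧ coeffQ F ℓ' (2 * i + 1) A.det ≠ 0}
      else k / 2) = s / 2 :=
  stmt_14_general ℓ' A k hkle s hs
end

section
/- Let o have residue field of characteristic 2, let A ∈ M_2(o_{ℓ'}) be of the companion form [[0, a⁻¹α],[a, β]], and let à be any lift to M_2(o_r). Define h_Ã^{ℓ'} = { x ∈ o_r : 2x ≡ 0 mod π^{ℓ'} and x(x+β̃) ≡ 0 mod π^{ℓ'} }. If char(o) = 2, then h_Ã^{ℓ'} equals {0, β̃} + π^{ℓ'−val(β)}o_r when val(β) < ⌈ℓ'/2⌉, and equals π^{⌈ℓ'/2⌉}o_r when val(β) ≥ ⌈ℓ'/2⌉; in particular |h_Ã^{ℓ'}| = 2·q^{r−ℓ'+val(β)} in the first case and q^{r−⌈ℓ'/2⌉} in the second. -/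
/-! The condition `2x ∈ (π^ℓ')` is void in characteristic 2. Lifting `x` and `β̃` to power
series `φ` and `b`, the other condition reads `ℓ' ≤ ord φ + ord (φ + b)`. Since `ord` is a
valuation, `min (ord φ) (ord (φ + b)) ≤ ord b`, and `ord (φ + b) = ord φ` when `ord φ < ord b`.
If `2 v < ℓ'` this forces `φ` or `φ + b` into `π^{ℓ'-v}`; if `ord b ≥ ⌈ℓ'/2⌉` it forces `φ`
into `π^{⌈ℓ'/2⌉}`. The ideal `π^k o_r` is in bijection with the polynomials of degree `< r - k`
via `p ↦ π^k p`, so it has `q^{r-k}` elements, and in the first case the set is the union of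
two of its cosets. -/

theorem AddSubgroup.card_setOf_mem_or_sub_mem {G : Type*} [AddCommGroup G] (H : AddSubgroup G)
    [Finite H] {b : G} (hb : b ∉ H) :
    Nat.card {x | x ∈ H ∨ x - b ∈ H} = 2 * Nat.card H := by
  have hdisj : Disjoint (H : Set G) ((· - b) ⁻¹' H) :=
    Set.disjoint_left.mpr fun x hx hxb => hb <| by simpa using H.sub_mem hx hxb
  have hfin : ((· - b) ⁻¹' (H : Set G)).Finite :=
    (Set.toFinite _).preimage (sub_left_injective (b := b)).injOn
  have htrans : ((· - b) ⁻¹' (H : Set G)).ncard = (H : Set G).ncard :=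
    Set.ncard_preimage_of_injective_subset_range sub_left_injective
      (fun x _ => ⟨x + b, add_sub_cancel_right x b⟩)
  rw [Nat.card_coe_set_eq, show {x | x ∈ H ∨ x - b ∈ H} = (H : Set G) ∪ (· - b) ⁻¹' H from rfl,
    Set.ncard_union_eq hdisj (Set.toFinite _) hfin, htrans, ← Nat.card_coe_set_eq,
    SetLike.coe_sort_coe, two_mul]

theorem Polynomial.eq_zero_of_X_pow_dvd_coe {R : Type*} [CommRing R] [IsDomain R]
    {f : Polynomial R} {n : ℕ} (hf : f.degree < n) (h : (PowerSeries.X : PowerSeries R) ^ n ∣ f) :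
    f = 0 := by
  simp only [PowerSeries.X_pow_dvd_iff, Polynomial.coeff_coe] at h
  exact eq_zero_of_dvd_of_degree_lt (X_pow_dvd_iff.mpr h) (by rwa [degree_X_pow])

namespace PowerSeries

variable {R : Type*}

theorem X_pow_dvd_iff_le_order [Semiring R] {n : ℕ} {φ : R⟦X⟧} :
    X ^ n ∣ φ ↔ (n : ℕ∞) ≤ φ.order := by
  rw [order_eq_emultiplicity_X, pow_dvd_iff_le_emultiplicity]

variable [CommRing R] [IsDomain R]

theorem le_order_mul_add_iff_of_order_eq {ℓ v : ℕ} (hv : 2 * v ≤ ℓ) {φ ψ : R⟦X⟧}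
    (hψ : ψ.order = v) :
    (ℓ : ℕ∞) ≤ (φ * (φ + ψ)).order ↔ ↑(ℓ - v) ≤ φ.order ∨ ↑(ℓ - v) ≤ (φ + ψ).order := by
  have hmin : min φ.order (φ + ψ).order ≤ v := by
    simpa [hψ, order_neg] using min_order_le_order_add (-φ) (φ + ψ)
  have hφ : min (φ + ψ).order v ≤ φ.order := by
    simpa [hψ, order_neg] using min_order_le_order_add (φ + ψ) (-ψ)
  have hφψ : min φ.order v ≤ (φ + ψ).order := hψ ▸ min_order_le_order_add φ ψ
  rw [order_mul]
  generalize φ.order = a, (φ + ψ).order = c at *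
  induction a using ENat.recTopCoe <;> induction c using ENat.recTopCoe
  all_goals simp_all
  norm_cast at *
  omega

theorem le_order_mul_add_iff_of_le_order {ℓ m : ℕ} (hm : ℓ ≤ 2 * m) (hm' : 2 * m ≤ ℓ + 1)
    {φ ψ : R⟦X⟧} (hψ : m ≤ ψ.order) :
    (ℓ : ℕ∞) ≤ (φ * (φ + ψ)).order ↔ ↑m ≤ φ.order := by
  rw [order_mul]
  constructor
  · intro h
    by_contra! hlt
    have hc : (φ + ψ).order = φ.order := by
      rw [order_add_of_order_ne _ _ (hlt.trans_le hψ).ne, min_eq_left (hlt.trans_le hψ).le]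
    rw [hc] at h
    lift φ.order to ℕ using (hlt.trans (ENat.natCast_lt_top m)).ne with a
    norm_cast at h hlt
    omega
  · intro h
    have hc : (m : ℕ∞) ≤ (φ + ψ).order := (le_min h hψ).trans (min_order_le_order_add φ ψ)
    calc (ℓ : ℕ∞) ≤ ↑m + ↑m := by exact_mod_cast (by omega : ℓ ≤ m + m)
      _ ≤ φ.order + (φ + ψ).order := add_le_add h hc
end PowerSeries

open PowerSeries Ideal

namespace OFq

noncomputable abbrev mk (F : Type*) [Field F] (r : ℕ) : F⟦X⟧ →+* OFq F r :=
  Ideal.Quotient.mk _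

variable {F : Type*} [Field F] {r k : ℕ}

theorem span_Xbar_pow_eq_map (k : ℕ) :
    span {Xbar F r ^ k} = (span {(X : F⟦X⟧) ^ k}).map (mk F r) := by
  rw [map_span, Set.image_singleton, map_pow, Xbar]

theorem mk_mem_span_Xbar_pow_iff (hk : k ≤ r) (φ : F⟦X⟧) :
    mk F r φ ∈ span {Xbar F r ^ k} ↔ (k : ℕ∞) ≤ φ.order := by
  rw [span_Xbar_pow_eq_map, mem_quotient_iff_mem, mem_span_singleton, X_pow_dvd_iff_le_order]
  exact span_singleton_le_span_singleton.mpr (pow_dvd_pow X hk)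

theorem Xbar_pow_mul_mk (k : ℕ) (φ : F⟦X⟧) : Xbar F r ^ k * mk F r φ = mk F r (X ^ k * φ) := by
  rw [map_mul, map_pow, Xbar]

theorem two_eq_zero [CharP F 2] : (2 : OFq F r) = 0 := by
  have := congrArg (algebraMap F (OFq F r)) (CharTwo.two_eq_zero (R := F))
  rwa [map_ofNat, map_zero] at this

theorem bijective_mul_Xbar_pow (hk : k ≤ r) :
    Function.Bijective (fun p : Polynomial.degreeLT F (r - k) =>
      (⟨Xbar F r ^ k * mk F r (p : Polynomial F), mem_span_singleton.mpr (dvd_mul_right _ _)⟩ :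
        span {Xbar F r ^ k})) := by
  have hr : r = k + (r - k) := by omega
  constructor
  · rintro ⟨p, hp⟩ ⟨q, hq⟩ hpq
    have hpq : mk F r (X ^ k * ((p - q : Polynomial F) : F⟦X⟧)) = 0 := by
      rw [Polynomial.coe_sub, mul_sub, map_sub, ← Xbar_pow_mul_mk, ← Xbar_pow_mul_mk, sub_eq_zero]
      exact congrArg Subtype.val hpq
    rw [Subtype.mk.injEq, ← sub_eq_zero]
    rw [Quotient.eq_zero_iff_mem, mem_span_singleton, hr, pow_add,
      mul_dvd_mul_iff_left (pow_ne_zero _ X_ne_zero)] at hpq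
    rw [Polynomial.mem_degreeLT] at hp hq
    exact Polynomial.eq_zero_of_X_pow_dvd_coe
      ((Polynomial.degree_sub_le p q).trans_lt (max_lt hp hq)) hpq
  · rintro ⟨x, hx⟩
    obtain ⟨y, rfl⟩ := mem_span_singleton.mp hx
    obtain ⟨φ, rfl⟩ := Ideal.Quotient.mk_surjective y
    refine ⟨⟨φ.trunc (r - k), Polynomial.mem_degreeLT.mpr (degree_trunc_lt _ _)⟩, ?_⟩
    simp only [Subtype.mk.injEq, Xbar_pow_mul_mk]
    rw [Ideal.Quotient.eq, mem_span_singleton, ← mul_sub]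
    nth_rw 2 [eq_X_pow_mul_shift_add_trunc (r - k) φ]
    rw [sub_add_cancel_right, mul_neg, dvd_neg, ← mul_assoc, ← pow_add, ← hr]
    exact dvd_mul_right _ _

theorem card_span_Xbar_pow [Fintype F] (hk : k ≤ r) :
    Nat.card (span {Xbar F r ^ k}) = Fintype.card F ^ (r - k) := by
  rw [← Nat.card_eq_of_bijective _ (bijective_mul_Xbar_pow hk),
    Nat.card_congr (Polynomial.degreeLTEquiv F (r - k)).toEquiv, Nat.card_fun]
  simp

theorem card_setOf_mem_or_sub_mem_span_Xbar_pow [Fintype F] (hk : k ≤ r) {β : OFq F r}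
    (hβ : β ∉ span {Xbar F r ^ k}) :
    Nat.card {x | x ∈ span {Xbar F r ^ k} ∨ x - β ∈ span {Xbar F r ^ k}} =
      2 * Fintype.card F ^ (r - k) := by
  have : Finite (span {Xbar F r ^ k}) := Nat.finite_of_card_ne_zero <| by
    rw [card_span_Xbar_pow hk]; exact pow_ne_zero _ Fintype.card_ne_zero
  rw [← card_span_Xbar_pow hk]
  exact (span {Xbar F r ^ k}).toAddSubgroup.card_setOf_mem_or_sub_mem hβ

theorem setOf_exists_eq_Xbar_pow_mul (k : ℕ) :
    {x : OFq F r | ∃ y, x = Xbar F r ^ k * y} = span {Xbar F r ^ k} := by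
  ext x; exact mem_span_singleton.symm

theorem setOf_exists_eq_Xbar_pow_mul_or (k : ℕ) (β : OFq F r) :
    {x : OFq F r | ∃ y, x = Xbar F r ^ k * y ∨ x = β + Xbar F r ^ k * y} =
      {x | x ∈ span {Xbar F r ^ k} ∨ x - β ∈ span {Xbar F r ^ k}} := by
  ext x
  simp only [Set.mem_ofPred_eq, exists_or, mem_span_singleton, ← sub_eq_iff_eq_add']
  rfl

variable {ℓ : ℕ} {b : F⟦X⟧}

theorem mul_add_mem_span_iff_of_order_eq {v : ℕ} (hℓ : ℓ ≤ r) (hv : 2 * v ≤ ℓ)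
    (hb : b.order = v) (x : OFq F r) :
    x * (x + mk F r b) ∈ span {Xbar F r ^ ℓ} ↔
      x ∈ span {Xbar F r ^ (ℓ - v)} ∨ x + mk F r b ∈ span {Xbar F r ^ (ℓ - v)} := by
  obtain ⟨φ, rfl⟩ := Ideal.Quotient.mk_surjective x
  rw [← map_add, ← map_mul, mk_mem_span_Xbar_pow_iff hℓ, mk_mem_span_Xbar_pow_iff (by omega),
    mk_mem_span_Xbar_pow_iff (by omega)]
  exact le_order_mul_add_iff_of_order_eq hv hb

theorem mul_add_mem_span_iff_of_le_order {m : ℕ} (hℓ : ℓ ≤ r) (hm : ℓ ≤ 2 * m)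
    (hm' : 2 * m ≤ ℓ + 1) (hb : m ≤ b.order) (x : OFq F r) :
    x * (x + mk F r b) ∈ span {Xbar F r ^ ℓ} ↔ x ∈ span {Xbar F r ^ m} := by
  obtain ⟨φ, rfl⟩ := Ideal.Quotient.mk_surjective x
  rw [← map_add, ← map_mul, mk_mem_span_Xbar_pow_iff hℓ, mk_mem_span_Xbar_pow_iff (by omega)]
  exact le_order_mul_add_iff_of_le_order hm hm' hb

end OFq

theorem stmt_16_general {F : Type*} [Field F] [Fintype F] [CharP F 2]
    (r : ℕ) (ℓ' : ℕ) (hℓ' : ℓ' = r / 2)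
    (βt : OFq F r) (v : ℕ)
    (hv1 : ∀ i, i < v → coeffQ F r i βt = 0)
    (hv2 : v < ℓ' → coeffQ F r v βt ≠ 0) :
    (v < (ℓ' + 1) / 2 →
      ({x : OFq F r | 2 * x ∈ Ideal.span {Xbar F r ^ ℓ'} ∧
          x * (x + βt) ∈ Ideal.span {Xbar F r ^ ℓ'}} =
        {x : OFq F r | ∃ y : OFq F r,
          x = Xbar F r ^ (ℓ' - v) * y ∨ x = βt + Xbar F r ^ (ℓ' - v) * y}) ∧
      Nat.card {x : OFq F r | 2 * x ∈ Ideal.span {Xbar F r ^ ℓ'} ∧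
          x * (x + βt) ∈ Ideal.span {Xbar F r ^ ℓ'}} =
        2 * Fintype.card F ^ (r - ℓ' + v)) ∧
    ((ℓ' + 1) / 2 ≤ v →
      ({x : OFq F r | 2 * x ∈ Ideal.span {Xbar F r ^ ℓ'} ∧
          x * (x + βt) ∈ Ideal.span {Xbar F r ^ ℓ'}} =
        {x : OFq F r | ∃ y : OFq F r, x = Xbar F r ^ ((ℓ' + 1) / 2) * y}) ∧
      Nat.card {x : OFq F r | 2 * x ∈ Ideal.span {Xbar F r ^ ℓ'} ∧
          x * (x + βt) ∈ Ideal.span {Xbar F r ^ ℓ'}} =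
        Fintype.card F ^ (r - (ℓ' + 1) / 2)) := by
  obtain ⟨b, rfl, hvb, hbv⟩ : ∃ b : F⟦X⟧, OFq.mk F r b = βt ∧ (v : ℕ∞) ≤ b.order ∧
      (v < ℓ' → b.order ≤ v) :=
    ⟨_, Function.surjInv_eq _ βt, nat_le_order _ v hv1, fun h => order_le v (hv2 h)⟩
  have hℓr : ℓ' ≤ r := by omega
  have hneg : -OFq.mk F r b = OFq.mk F r b := by
    rw [neg_eq_iff_add_eq_zero, ← two_mul, OFq.two_eq_zero, zero_mul]
  simp only [OFq.two_eq_zero, zero_mul, Submodule.zero_mem, true_and]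
  refine ⟨fun hv => ?_, fun hv => ?_⟩
  · have hbv : b.order = v := le_antisymm (hbv (by omega)) hvb
    have hset : {x | x * (x + OFq.mk F r b) ∈ span {Xbar F r ^ ℓ'}} =
        {x | x ∈ span {Xbar F r ^ (ℓ' - v)} ∨ x - OFq.mk F r b ∈ span {Xbar F r ^ (ℓ' - v)}} := by
      ext x
      rw [Set.mem_ofPred_eq, Set.mem_ofPred_eq,
        OFq.mul_add_mem_span_iff_of_order_eq hℓr (by omega) hbv, sub_eq_add_neg, hneg]
    rw [OFq.setOf_exists_eq_Xbar_pow_mul_or, hset]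
    have hb : OFq.mk F r b ∉ span {Xbar F r ^ (ℓ' - v)} := by
      rw [OFq.mk_mem_span_Xbar_pow_iff (by omega), hbv]
      exact_mod_cast (by omega : ¬ ℓ' - v ≤ v)
    refine ⟨rfl, ?_⟩
    rw [OFq.card_setOf_mem_or_sub_mem_span_Xbar_pow (by omega) hb]
    congr 2; omega
  · have hset : {x | x * (x + OFq.mk F r b) ∈ span {Xbar F r ^ ℓ'}} =
        span {Xbar F r ^ ((ℓ' + 1) / 2)} :=
      Set.ext <| OFq.mul_add_mem_span_iff_of_le_order hℓr (by omega) (by omega)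
        ((Nat.cast_le.mpr hv).trans hvb)
    rw [OFq.setOf_exists_eq_Xbar_pow_mul, hset]
    exact ⟨rfl, OFq.card_span_Xbar_pow (by omega)⟩

/-- in characteristic 2, the group
`h_Ã^{ℓ'} = { x ∈ o_r : 2x ≡ 0 and x(x+β̃) ≡ 0 mod π^{ℓ'} }` equals
`{0, β̃} + π^{ℓ'−v}o_r` when `v = val(β) < ⌈ℓ'/2⌉`, and `π^{⌈ℓ'/2⌉}o_r` when
`v ≥ ⌈ℓ'/2⌉`; with cardinalities `2·q^{r−ℓ'+v}` and `q^{r−⌈ℓ'/2⌉}` respectively. -/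
theorem stmt_16 {F : Type*} [Field F] [Fintype F] [CharP F 2]
    (r : ℕ) (hr : 2 ≤ r) (ℓ' : ℕ) (hℓ' : ℓ' = r / 2)
    (βt : OFq F r) (v : ℕ) (hvle : v ≤ ℓ')
    (hv1 : ∀ i, i < v → coeffQ F r i βt = 0)
    (hv2 : v < ℓ' → coeffQ F r v βt ≠ 0) :
    (v < (ℓ' + 1) / 2 →
      ({x : OFq F r | 2 * x ∈ Ideal.span {Xbar F r ^ ℓ'} ∧
          x * (x + βt) ∈ Ideal.span {Xbar F r ^ ℓ'}} =
        {x : OFq F r | ∃ y : OFq F r,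
          x = Xbar F r ^ (ℓ' - v) * y ∨ x = βt + Xbar F r ^ (ℓ' - v) * y}) ∧
      Nat.card {x : OFq F r | 2 * x ∈ Ideal.span {Xbar F r ^ ℓ'} ∧
          x * (x + βt) ∈ Ideal.span {Xbar F r ^ ℓ'}} =
        2 * Fintype.card F ^ (r - ℓ' + v)) ∧
    ((ℓ' + 1) / 2 ≤ v →
      ({x : OFq F r | 2 * x ∈ Ideal.span {Xbar F r ^ ℓ'} ∧
          x * (x + βt) ∈ Ideal.span {Xbar F r ^ ℓ'}} =
        {x : OFq F r | ∃ y : OFq F r, x = Xbar F r ^ ((ℓ' + 1) / 2) * y}) ∧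
      Nat.card {x : OFq F r | 2 * x ∈ Ideal.span {Xbar F r ^ ℓ'} ∧
          x * (x + βt) ∈ Ideal.span {Xbar F r ^ ℓ'}} =
        Fintype.card F ^ (r - (ℓ' + 1) / 2)) :=
  stmt_16_general r ℓ' hℓ' βt v hv1 hv2
end
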